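/- arXiv:2111.06006 — 2 statements merged into one kernel-verified Lean document; each statement's English description precedes it below -/
import Mathlib

section
/- Projection preserves triangle orientation: let c = (0,0,0) be the camera, let p, q, r lie on the plane z = 1, and let p' = p_z·p, q' = q_z·q, r' = r_z·r with p_z, q_z, r_z > 0. If det(p, q, r) > 0 then (c - p') · ((r' - p') × (q' - p')) > 0; i.e., a clockwise (positively oriented) 2D triangle lifts to a front-facing 3D triangle. -/
/-!
With the camera at the origin, the orientation of the lifted triangle is the triple product
`p' ⬝ᵥ (q' ⨯₃ r') = det ![p', q', r']`, and scaling the rows by the depths multiplies this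
determinant by `pz * qz * rz > 0`. So the sign is that of `det ![p, q, r]`.
-/

open Matrix

theorem zero_sub_dotProduct_cross_sub_eq_det {R : Type*} [CommRing R] (a b c : Fin 3 → R) :
    (0 - a) ⬝ᵥ ((c - a) ⨯₃ (b - a)) = det ![a, b, c] := calc
  _ = -(a ⬝ᵥ (c ⨯₃ b)) := by
    simp only [map_sub, LinearMap.sub_apply, cross_self, sub_zero, zero_sub, neg_dotProduct,
      dotProduct_sub, dot_self_cross, dot_cross_self, neg_zero]
  _ = a ⬝ᵥ (b ⨯₃ c) := by rw [← cross_anticomm, dotProduct_neg, neg_neg]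
  _ = det ![a, b, c] := triple_product_eq_det a b c

theorem det_smul_rows_fin_three {R : Type*} [CommRing R] (a b c : R) (u v w : Fin 3 → R) :
    det ![a • u, b • v, c • w] = a * b * c * det ![u, v, w] := by
  have rows : (![a • u, b • v, c • w] : Matrix (Fin 3) (Fin 3) R) =
      of fun i j => ![a, b, c] i * ![u, v, w] i j := by
    ext i j; fin_cases i <;> rfl
  rw [rows]
  exact (det_mul_column ![a, b, c] (of ![u, v, w])).trans (by rw [Fin.prod_univ_three]; rfl)

theorem lift_front_facing_general (p q r : Fin 3 → ℝ)
    (pz qz rz : ℝ) (hpz : 0 < pz) (hqz : 0 < qz) (hrz : 0 < rz)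
    (hdet : 0 < Matrix.det ![p, q, r]) :
    0 < (0 - pz • p) ⬝ᵥ ((rz • r - pz • p) ⨯₃ (qz • q - pz • p)) := by
  rw [zero_sub_dotProduct_cross_sub_eq_det, det_smul_rows_fin_three]
  positivity

/-- Projection preserves triangle orientation: a positively oriented (clockwise in the paper's
convention) triangle on the image plane `z = 1` lifts, under positive depths, to a
front-facing triangle with respect to the camera `c = 0`. -/
theorem lift_front_facing (p q r : Fin 3 → ℝ)
    (hp : p 2 = 1) (hq : q 2 = 1) (hr : r 2 = 1)
    (pz qz rz : ℝ) (hpz : 0 < pz) (hqz : 0 < qz) (hrz : 0 < rz)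
    (hdet : 0 < Matrix.det ![p, q, r]) :
    0 < (0 - pz • p) ⬝ᵥ ((rz • r - pz • p) ⨯₃ (qz • q - pz • p)) :=
  lift_front_facing_general p q r pz qz rz hpz hqz hrz hdet
end

section
/- For a fan of k positively oriented triangles around an interior vertex v of a planar triangulation, where consecutive triangles share an edge and the cyclic sequence of edge directions from v returns to its start, the total angle Θ at v is a positive integer multiple of 2π: Θ = 2πn for some n ≥ 1. -/
open Finset

/-- For a closed fan of `k` positively oriented triangles `(v, w i, w (i+1))` around a vertex
`v` in the plane (identified with `ℂ`), with each angle
`θ i = arg((w (i+1) - v) / (w i - v)) ∈ (0, π)` and the cyclic sequence of edge directions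
returning to its start (`w k = w 0`), the total angle `Θ = Σ θ i` is a positive integer
multiple of `2π`. -/
theorem angle_sum_eq_two_pi_mul
    (k : ℕ) (hk : 0 < k) (v : ℂ) (w : ℕ → ℂ)
    (hclose : w k = w 0) (hne : ∀ i ≤ k, w i ≠ v)
    (hpos : ∀ i < k,
      Complex.arg ((w (i + 1) - v) / (w i - v)) ∈ Set.Ioo 0 Real.pi) :
    ∃ n : ℕ, 1 ≤ n ∧
      ∑ i ∈ Finset.range k, Complex.arg ((w (i + 1) - v) / (w i - v)) =
        2 * Real.pi * n := by
  set S := ∑ i ∈ Finset.range k, Complex.arg ((w (i + 1) - v) / (w i - v)) with hS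
  have hSangle : (S : Real.Angle) = 0 := by
    rw [hS, ← Real.Angle.coe_coeHom, map_sum Real.Angle.coeHom, Real.Angle.coe_coeHom]
    have : ∀ i ∈ Finset.range k,
        (Complex.arg ((w (i + 1) - v) / (w i - v)) : Real.Angle) =
          (Complex.arg (w (i + 1) - v) : Real.Angle) - Complex.arg (w i - v) := by
      intro i hi
      rw [Finset.mem_range] at hi
      exact Complex.arg_div_coe_angle (sub_ne_zero.2 (hne _ hi)) (sub_ne_zero.2 (hne _ hi.le))
    rw [Finset.sum_congr rfl this, Finset.sum_range_sub
      (fun i => (Complex.arg (w i - v) : Real.Angle)), hclose, sub_self]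
  have hSpos : 0 < S := by
    apply Finset.sum_pos
    · intro i hi
      exact (hpos i (Finset.mem_range.1 hi)).1
    · exact ⟨0, Finset.mem_range.2 hk⟩
  rw [← Real.Angle.coe_zero, Real.Angle.angle_eq_iff_two_pi_dvd_sub] at hSangle
  obtain ⟨m, hm⟩ := hSangle
  rw [sub_zero] at hm
  have hmpos : 0 < m := by
    by_contra h
    push_neg at h
    have : S ≤ 0 := by
      rw [hm]
      have : (m : ℝ) ≤ 0 := by exact_mod_cast h
      nlinarith [Real.pi_pos]
    linarith
  refine ⟨m.toNat, ?_, ?_⟩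
  · omega
  · rw [hm]; congr 1; exact_mod_cast (Int.toNat_of_nonneg hmpos.le).symm
end
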